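/- Let I be an instance of SPA-ST that admits a super-stable matching. Then for any two weakly stable matchings M1 and M2 in I, any lecturer l_k that is undersubscribed in M1, and any project p offered by l_k, the number of students assigned to p in M1 equals the number of students assigned to p in M2. -/

import Mathlib

open scoped Classical

/-- An instance of the Student-Project Allocation problem with lecturer
preferences over students, with Ties (SPA-ST).  `sPref s p q` means student `s`
ranks project `p` at least as highly as project `q` (`p ⪰_s q`); `lPref k t t'`
means lecturer `k` ranks student `t` at least as highly as student `t'`. -/
structure SPAST (S P L : Type) [Fintype S] [Fintype P] [Fintype L]
    [DecidableEq S] [DecidableEq P] [DecidableEq L] where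
  /-- the lecturer offering each project -/
  lec : P → L
  /-- project capacities -/
  c : P → ℕ
  /-- lecturer capacities -/
  d : L → ℕ
  cpos : ∀ p : P, 0 < c p
  dpos : ∀ k : L, 0 < d k
  /-- the set of projects acceptable to each student -/
  acc : S → Finset P
  sPref : S → P → P → Prop
  lPref : L → S → S → Prop
  sRefl : ∀ s : S, ∀ p ∈ acc s, sPref s p p
  sTrans : ∀ s : S, ∀ p ∈ acc s, ∀ q ∈ acc s, ∀ r ∈ acc s,
    sPref s p q → sPref s q r → sPref s p r
  sTotal : ∀ s : S, ∀ p ∈ acc s, ∀ q ∈ acc s, sPref s p q ∨ sPref s q p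
  lRefl : ∀ k : L, ∀ t : S, (∃ p ∈ acc t, lec p = k) → lPref k t t
  lTrans : ∀ k : L, ∀ t1 t2 t3 : S,
    (∃ p ∈ acc t1, lec p = k) → (∃ p ∈ acc t2, lec p = k) → (∃ p ∈ acc t3, lec p = k) →
    lPref k t1 t2 → lPref k t2 t3 → lPref k t1 t3
  lTotal : ∀ k : L, ∀ t1 t2 : S,
    (∃ p ∈ acc t1, lec p = k) → (∃ p ∈ acc t2, lec p = k) →
    lPref k t1 t2 ∨ lPref k t2 t1
  capLB : ∀ p : P, c p ≤ d (lec p)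
  capUB : ∀ k : L, d k ≤ ∑ p ∈ Finset.univ.filter (fun p => lec p = k), c p

namespace SPAST

variable {S P L : Type} [Fintype S] [Fintype P] [Fintype L]
  [DecidableEq S] [DecidableEq P] [DecidableEq L]

/-- `M` is a matching: pairs are acceptable, each student is matched at most once,
and project and lecturer capacities are respected. -/
def IsMatching (I : SPAST S P L) (M : Finset (S × P)) : Prop :=
  (∀ x ∈ M, x.2 ∈ I.acc x.1) ∧
  (∀ s : S, ∀ p q : P, (s, p) ∈ M → (s, q) ∈ M → p = q) ∧
  (∀ p : P, (M.filter (fun x => x.2 = p)).card ≤ I.c p) ∧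
  (∀ k : L, (M.filter (fun x => I.lec x.2 = k)).card ≤ I.d k)

/-- The set `M(p)` of students assigned to project `p` in `M`. -/
def projAsg (M : Finset (S × P)) (p : P) : Finset S :=
  (M.filter (fun x => x.2 = p)).image Prod.fst

/-- The set `M(l_k)` of students assigned to lecturer `k` in `M`. -/
def lecAsg (I : SPAST S P L) (M : Finset (S × P)) (k : L) : Finset S :=
  (M.filter (fun x => I.lec x.2 = k)).image Prod.fst

/-- `t` is a least-preferred (worst) student of lecturer `k` in the set `T`. -/
def WorstIn (I : SPAST S P L) (k : L) (T : Finset S) (t : S) : Prop :=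
  t ∈ T ∧ ∀ t' ∈ T, I.lPref k t' t

/-- `(s, p)` is a super-blocking pair for `M`. -/
def SuperBlocking (I : SPAST S P L) (M : Finset (S × P)) (s : S) (p : P) : Prop :=
  p ∈ I.acc s ∧ (s, p) ∉ M ∧
  (∀ q : P, (s, q) ∈ M → ¬(I.sPref s q p ∧ ¬I.sPref s p q)) ∧
  (((projAsg M p).card < I.c p ∧ (lecAsg I M (I.lec p)).card < I.d (I.lec p)) ∨
   ((projAsg M p).card < I.c p ∧ (lecAsg I M (I.lec p)).card = I.d (I.lec p) ∧
     (s ∈ lecAsg I M (I.lec p) ∨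
      ∃ t : S, WorstIn I (I.lec p) (lecAsg I M (I.lec p)) t ∧ I.lPref (I.lec p) s t)) ∨
   ((projAsg M p).card = I.c p ∧
     ∃ t : S, WorstIn I (I.lec p) (projAsg M p) t ∧ I.lPref (I.lec p) s t))

/-- `(s, p)` is a weakly-blocking pair for `M`. -/
def WeakBlocking (I : SPAST S P L) (M : Finset (S × P)) (s : S) (p : P) : Prop :=
  p ∈ I.acc s ∧ (s, p) ∉ M ∧
  (∀ q : P, (s, q) ∈ M → I.sPref s p q ∧ ¬I.sPref s q p) ∧
  (((projAsg M p).card < I.c p ∧ (lecAsg I M (I.lec p)).card < I.d (I.lec p)) ∨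
   ((projAsg M p).card < I.c p ∧ (lecAsg I M (I.lec p)).card = I.d (I.lec p) ∧
     (s ∈ lecAsg I M (I.lec p) ∨
      ∃ t : S, WorstIn I (I.lec p) (lecAsg I M (I.lec p)) t ∧
        (I.lPref (I.lec p) s t ∧ ¬I.lPref (I.lec p) t s))) ∨
   ((projAsg M p).card = I.c p ∧
     ∃ t : S, WorstIn I (I.lec p) (projAsg M p) t ∧
       (I.lPref (I.lec p) s t ∧ ¬I.lPref (I.lec p) t s)))

/-- `M` is a super-stable matching in `I`. -/
def SuperStable (I : SPAST S P L) (M : Finset (S × P)) : Prop :=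
  I.IsMatching M ∧ ∀ (s : S) (p : P), ¬SuperBlocking I M s p

/-- `M` is a weakly stable matching in `I`. -/
def WeaklyStable (I : SPAST S P L) (M : Finset (S × P)) : Prop :=
  I.IsMatching M ∧ ∀ (s : S) (p : P), ¬WeakBlocking I M s p

/-- `I` is an SPA-S instance: all preference lists are strictly ordered
(the preorders are antisymmetric). -/
def StrictPrefs (I : SPAST S P L) : Prop :=
  (∀ s : S, ∀ p ∈ I.acc s, ∀ q ∈ I.acc s, I.sPref s p q → I.sPref s q p → p = q) ∧
  (∀ k : L, ∀ t t' : S, (∃ p ∈ I.acc t, I.lec p = k) → (∃ p ∈ I.acc t', I.lec p = k) →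
    I.lPref k t t' → I.lPref k t' t → t = t')

/-- `I'` is an SPA-S instance obtained from `I` by breaking the ties. -/
def TieBreaking (I I' : SPAST S P L) : Prop :=
  I'.lec = I.lec ∧ I'.c = I.c ∧ I'.d = I.d ∧ I'.acc = I.acc ∧
  StrictPrefs I' ∧
  (∀ (s : S) (p q : P), I.sPref s p q → ¬I.sPref s q p →
    I'.sPref s p q ∧ ¬I'.sPref s q p) ∧
  (∀ (k : L) (t t' : S), I.lPref k t t' → ¬I.lPref k t' t →
    I'.lPref k t t' ∧ ¬I'.lPref k t' t)

end SPAST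

/-!
Fix a super-stable matching `M` and compare it with a weakly stable matching `W`. A student
whose assignment differs in the two matchings either weakly prefers his `W`-project (then he
does not super-block `M`, so the lecturer strictly prefers everybody holding the contested seat
in `M`) or strictly prefers his `M`-project (then he does not weakly block `W`, so the lecturer
weakly prefers everybody holding the contested seat in `W`). Hence students of the two kinds
never contest each other's seats at a common lecturer, and counting both kinds project by
project and lecturer by lecturer shows that every lecturer has the same number of students in
`M` and `W`, and so does every project of a lecturer undersubscribed in `M`. Comparing `M1` and
`M2` with the same `M` gives the theorem.
-/

open Finset

namespace SPAST

@[simp]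
theorem mem_projAsg {S P : Type} [DecidableEq S] [DecidableEq P] {A : Finset (S × P)} {s : S}
    {p : P} : s ∈ projAsg A p ↔ (s, p) ∈ A := by
  simp [projAsg]

variable {S P L : Type} [Fintype S] [Fintype P] [Fintype L]
  [DecidableEq S] [DecidableEq P] [DecidableEq L] {I : SPAST S P L}

section Assignments

variable {A : Finset (S × P)}

@[simp]
theorem mem_lecAsg {s : S} {k : L} : s ∈ lecAsg I A k ↔ ∃ q, (s, q) ∈ A ∧ I.lec q = k := by
  simp [lecAsg]

theorem IsMatching.mono {B : Finset (S × P)} (hA : I.IsMatching A) (hBA : B ⊆ A) :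
    I.IsMatching B :=
  ⟨fun x hx => hA.1 x (hBA hx), fun s p q hp hq => hA.2.1 s p q (hBA hp) (hBA hq),
    fun p => (card_le_card (filter_subset_filter _ hBA)).trans (hA.2.2.1 p),
    fun k => (card_le_card (filter_subset_filter _ hBA)).trans (hA.2.2.2 k)⟩

theorem card_projAsg_le (hA : I.IsMatching A) (p : P) : (projAsg A p).card ≤ I.c p :=
  card_image_le.trans (hA.2.2.1 p)

theorem card_lecAsg_le (hA : I.IsMatching A) (k : L) : (lecAsg I A k).card ≤ I.d k :=
  card_image_le.trans (hA.2.2.2 k)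

theorem disjoint_projAsg (hA : I.IsMatching A) {p q : P} (hpq : p ≠ q) :
    Disjoint (projAsg A p) (projAsg A q) :=
  disjoint_left.2 fun s hp hq => hpq (hA.2.1 s p q (mem_projAsg.1 hp) (mem_projAsg.1 hq))

theorem lecAsg_eq_biUnion (k : L) :
    lecAsg I A k = (univ.filter fun q => I.lec q = k).biUnion (projAsg A) := by
  ext s
  simp [and_comm]

theorem card_inter_biUnion_projAsg (hA : I.IsMatching A) (T : Finset S) (Q : Finset P) :
    (T ∩ Q.biUnion (projAsg A)).card = ∑ q ∈ Q, (T ∩ projAsg A q).card := by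
  rw [inter_biUnion, card_biUnion]
  exact fun p _ q _ hpq => (disjoint_projAsg hA hpq).mono inter_subset_right inter_subset_right

theorem card_inter_lecAsg (hA : I.IsMatching A) (T : Finset S) (k : L) :
    (T ∩ lecAsg I A k).card = ∑ q ∈ univ.filter (fun q => I.lec q = k), (T ∩ projAsg A q).card := by
  rw [lecAsg_eq_biUnion, card_inter_biUnion_projAsg hA]

theorem card_lecAsg (hA : I.IsMatching A) (k : L) :
    (lecAsg I A k).card = ∑ q ∈ univ.filter (fun q => I.lec q = k), (projAsg A q).card := by
  simpa using card_inter_lecAsg hA univ k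

theorem sum_card_inter_lecAsg (hA : I.IsMatching A) (T : Finset S) :
    ∑ k, (T ∩ lecAsg I A k).card = (T ∩ univ.biUnion (projAsg A)).card := by
  simp only [card_inter_lecAsg hA]
  rw [sum_fiberwise, card_inter_biUnion_projAsg hA]

end Assignments

section Preferences

/-- The students `t` on which the preorder `I.lPref k` is defined. -/
def RankedBy (I : SPAST S P L) (k : L) (t : S) : Prop :=
  ∃ p ∈ I.acc t, I.lec p = k

theorem rankedBy_of_mem_lecAsg {A : Finset (S × P)} (hA : I.IsMatching A) {k : L} {t : S}
    (ht : t ∈ lecAsg I A k) : RankedBy I k t := by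
  obtain ⟨q, hq, rfl⟩ := mem_lecAsg.1 ht
  exact ⟨q, hA.1 _ hq, rfl⟩

variable {k : L} {T : Finset S}

theorem exists_worstIn (hT : ∀ t ∈ T, RankedBy I k t) (hne : T.Nonempty) :
    ∃ t, WorstIn I k T t := by
  induction hne using Finset.Nonempty.cons_induction with
  | singleton a =>
    refine ⟨a, mem_singleton_self a, fun t ht => ?_⟩
    rw [mem_singleton.1 ht]
    exact I.lRefl k a (hT a (mem_singleton_self a))
  | cons a T ha hne ih =>
    have ha' := hT a (mem_cons_self a T)
    obtain ⟨t, htT, ht⟩ := ih fun t ht => hT t (mem_cons_of_mem ht)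
    have ht' := hT t (mem_cons_of_mem htT)
    rcases I.lTotal k a t ha' ht' with hat | hta
    · refine ⟨t, mem_cons_of_mem htT, fun t' ht'' => ?_⟩
      rcases mem_cons.1 ht'' with rfl | ht''
      exacts [hat, ht t' ht'']
    · refine ⟨a, mem_cons_self a T, fun t' ht'' => ?_⟩
      rcases mem_cons.1 ht'' with rfl | ht''
      exacts [I.lRefl k t' ha',
        I.lTrans k t' t a (hT t' (mem_cons_of_mem ht'')) ht' ha' (ht t' ht'') hta]

theorem lPref_strict_of_forall_worstIn (hT : ∀ t ∈ T, RankedBy I k t) {x : S}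
    (hx : RankedBy I k x) (h : ∀ t, WorstIn I k T t → ¬I.lPref k x t) {y : S} (hy : y ∈ T) :
    I.lPref k y x ∧ ¬I.lPref k x y := by
  obtain ⟨t, htT, ht⟩ := exists_worstIn hT ⟨y, hy⟩
  have htx : I.lPref k t x := (I.lTotal k x t hx (hT t htT)).resolve_left (h t ⟨htT, ht⟩)
  exact ⟨I.lTrans k y t x (hT y hy) (hT t htT) hx (ht y hy) htx, fun hxy =>
    h t ⟨htT, ht⟩ (I.lTrans k x y t hx (hT y hy) (hT t htT) hxy (ht y hy))⟩

theorem lPref_of_forall_worstIn (hT : ∀ t ∈ T, RankedBy I k t) {x : S}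
    (hx : RankedBy I k x) (h : ∀ t, WorstIn I k T t → I.lPref k x t → I.lPref k t x) {y : S}
    (hy : y ∈ T) : I.lPref k y x := by
  obtain ⟨t, htT, ht⟩ := exists_worstIn hT ⟨y, hy⟩
  have htx : I.lPref k t x := (I.lTotal k x t hx (hT t htT)).elim (h t ⟨htT, ht⟩) id
  exact I.lTrans k y t x (hT y hy) (hT t htT) hx (ht y hy) htx

end Preferences

section Exchange

variable {A B : Finset (S × P)} {T₁ T₂ : Finset S}

/-- In `A`, student `y` holds a seat that a newcomer to `p` competes for: a seat of `p` if `p`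
is full, a seat of its lecturer otherwise. -/
def Obstructs (I : SPAST S P L) (A : Finset (S × P)) (p : P) (y : S) : Prop :=
  ((projAsg A p).card = I.c p ∧ y ∈ projAsg A p) ∨
    ((projAsg A p).card < I.c p ∧ y ∈ lecAsg I A (I.lec p))

theorem obstructs_of_mem (hA : I.IsMatching A) {x : S} {p : P} (hxp : (x, p) ∈ A) :
    Obstructs I A p x :=
  (card_projAsg_le hA p).eq_or_lt.imp (fun hfull => ⟨hfull, mem_projAsg.2 hxp⟩)
    (fun hund => ⟨hund, mem_lecAsg.2 ⟨p, hxp, rfl⟩⟩)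

/-- The situation between a super-stable `A` and a weakly stable `B`, with `T₁` the students
who weakly prefer their new `B`-project and `T₂` those who strictly prefer their lost
`A`-project. The axioms are invariant under swapping `(A, T₁)` with `(B, T₂)`. -/
structure IsExchange (I : SPAST S P L) (A B : Finset (S × P)) (T₁ T₂ : Finset S) : Prop where
  left_matching : I.IsMatching A
  right_matching : I.IsMatching B
  moved₁ : ∀ x ∈ T₁, ∃ p, (x, p) ∈ B ∧ (x, p) ∉ A
  moved₂ : ∀ y ∈ T₂, ∃ q, (y, q) ∈ A ∧ (y, q) ∉ B
  disjoint : Disjoint T₁ T₂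
  cover_left : ∀ s p, (s, p) ∈ A → (s, p) ∉ B → s ∈ T₁ ∨ s ∈ T₂
  cover_right : ∀ s p, (s, p) ∈ B → (s, p) ∉ A → s ∈ T₁ ∨ s ∈ T₂
  lecAsg_full₁ : ∀ x ∈ T₁, ∀ p, (x, p) ∈ B → (projAsg A p).card < I.c p →
    (lecAsg I A (I.lec p)).card = I.d (I.lec p)
  lecAsg_full₂ : ∀ y ∈ T₂, ∀ q, (y, q) ∈ A → (projAsg B q).card < I.c q →
    (lecAsg I B (I.lec q)).card = I.d (I.lec q)
  no_clash : ∀ x ∈ T₁, ∀ y ∈ T₂, ∀ p q, (x, p) ∈ B → (y, q) ∈ A → I.lec p = I.lec q →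
    Obstructs I A p y → Obstructs I B q x → False

namespace IsExchange

variable (h : IsExchange I A B T₁ T₂)
include h

theorem symm : IsExchange I B A T₂ T₁ where
  left_matching := h.right_matching
  right_matching := h.left_matching
  moved₁ := h.moved₂
  moved₂ := h.moved₁
  disjoint := h.disjoint.symm
  cover_left s p hB hA := (h.cover_right s p hB hA).symm
  cover_right s p hA hB := (h.cover_left s p hA hB).symm
  lecAsg_full₁ := h.lecAsg_full₂
  lecAsg_full₂ := h.lecAsg_full₁
  no_clash y hy x hx q p hyq hxp hl hyB hxA := h.no_clash x hx y hy p q hxp hyq hl.symm hxA hyB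

theorem notMem₁_of_mem_inter {s : S} {q : P} (hs : (s, q) ∈ A ∩ B) : s ∉ T₁ := fun hs₁ => by
  obtain ⟨p, hpB, hpA⟩ := h.moved₁ s hs₁
  rw [h.right_matching.2.1 s p q hpB (mem_inter.1 hs).2] at hpA
  exact hpA (mem_inter.1 hs).1

theorem card_projAsg (q : P) :
    (projAsg A q).card =
      (projAsg (A ∩ B) q).card + (T₁ ∩ projAsg A q).card + (T₂ ∩ projAsg A q).card := by
  have hfixed : projAsg A q \ (T₁ ∪ T₂) = projAsg (A ∩ B) q := by
    ext s
    simp only [mem_sdiff, mem_union, mem_projAsg, mem_inter, not_or]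
    constructor
    · rintro ⟨hA, hs₁, hs₂⟩
      exact ⟨hA, by_contra fun hB => (h.cover_left s q hA hB).elim hs₁ hs₂⟩
    · intro hs
      exact ⟨hs.1, h.notMem₁_of_mem_inter (mem_inter.2 hs),
        h.symm.notMem₁_of_mem_inter (mem_inter.2 hs.symm)⟩
  have hdisj : Disjoint (T₁ ∩ projAsg A q) (T₂ ∩ projAsg A q) :=
    h.disjoint.mono inter_subset_left inter_subset_left
  rw [← card_sdiff_add_card_inter (projAsg A q) (T₁ ∪ T₂), hfixed, inter_comm (projAsg A q),
    union_inter_distrib_right, card_union_of_disjoint hdisj, add_assoc]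

theorem card_lecAsg (l : L) :
    (lecAsg I A l).card =
      (lecAsg I (A ∩ B) l).card + (T₁ ∩ lecAsg I A l).card + (T₂ ∩ lecAsg I A l).card := by
  rw [SPAST.card_lecAsg h.left_matching, SPAST.card_lecAsg (h.left_matching.mono inter_subset_left),
    card_inter_lecAsg h.left_matching, card_inter_lecAsg h.left_matching, ← sum_add_distrib,
    ← sum_add_distrib]
  exact sum_congr rfl fun q _ => h.card_projAsg q

theorem notMem₂_of_full {p : P} (hfull : (projAsg A p).card = I.c p) {x y : S}
    (hx : x ∈ T₁) (hxp : (x, p) ∈ B) (hyp : (y, p) ∈ A) : y ∉ T₂ := fun hy =>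
  h.no_clash x hx y hy p p hxp hyp rfl (.inl ⟨hfull, mem_projAsg.2 hyp⟩)
    (obstructs_of_mem h.right_matching hxp)

theorem card_inter_projAsg_le (p : P)
    (hfull : (T₁ ∩ projAsg B p).Nonempty → (projAsg A p).card = I.c p) :
    (T₁ ∩ projAsg B p).card ≤ (T₁ ∩ projAsg A p).card := by
  rcases (T₁ ∩ projAsg B p).eq_empty_or_nonempty with hempty | hne
  · simp [hempty]
  obtain ⟨x, hx⟩ := hne
  have hfullA := hfull ⟨x, hx⟩
  have hT₂ : T₂ ∩ projAsg A p = ∅ := eq_empty_of_forall_notMem fun y hy =>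
    h.notMem₂_of_full hfullA (mem_inter.1 hx).1 (mem_projAsg.1 (mem_inter.1 hx).2)
      (mem_projAsg.1 (mem_inter.1 hy).2) (mem_inter.1 hy).1
  have hA := h.card_projAsg p
  have hB := h.symm.card_projAsg p
  rw [hT₂, card_empty] at hA
  rw [inter_comm B A] at hB
  have := card_projAsg_le h.right_matching p
  omega

theorem card_inter_lecAsg_le (l : L) :
    (T₁ ∩ lecAsg I B l).card ≤ (T₁ ∩ lecAsg I A l).card := by
  -- Either `l` is full in `A`, and then no `T₂`-student leaves an `A`-project of `l` that is
  -- undersubscribed in `B`; or every `B`-project of a `T₁`-student at `l` is full in `A`.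
  by_cases hund : ∃ x ∈ T₁, ∃ p, (x, p) ∈ B ∧ I.lec p = l ∧ (projAsg A p).card < I.c p
  · obtain ⟨x, hx, p, hxp, rfl, hund⟩ := hund
    have hT₂ : (T₂ ∩ lecAsg I A (I.lec p)).card ≤ (T₂ ∩ lecAsg I B (I.lec p)).card := by
      rw [card_inter_lecAsg h.left_matching, card_inter_lecAsg h.right_matching]
      refine sum_le_sum fun q hq => h.symm.card_inter_projAsg_le q fun ⟨y, hy⟩ => ?_
      rw [mem_inter, mem_projAsg] at hy
      have hl : I.lec q = I.lec p := (mem_filter.1 hq).2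
      refine (card_projAsg_le h.right_matching q).eq_or_lt.resolve_right fun hund' => ?_
      exact h.no_clash x hx y hy.1 p q hxp hy.2 hl.symm
        (.inr ⟨hund, mem_lecAsg.2 ⟨q, hy.2, hl⟩⟩) (.inr ⟨hund', mem_lecAsg.2 ⟨p, hxp, hl.symm⟩⟩)
    have hA := h.card_lecAsg (I.lec p)
    have hB := h.symm.card_lecAsg (I.lec p)
    rw [inter_comm B A] at hB
    have := h.lecAsg_full₁ x hx p hxp hund
    have := card_lecAsg_le h.right_matching (I.lec p)
    omega
  · push Not at hund
    rw [card_inter_lecAsg h.right_matching, card_inter_lecAsg h.left_matching]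
    refine sum_le_sum fun q hq => h.card_inter_projAsg_le q fun ⟨x, hx⟩ => ?_
    rw [mem_inter, mem_projAsg] at hx
    exact (card_projAsg_le h.left_matching q).antisymm
      (hund x hx.1 q hx.2 (mem_filter.1 hq).2)

theorem card_inter_lecAsg_eq (l : L) :
    (T₁ ∩ lecAsg I B l).card = (T₁ ∩ lecAsg I A l).card := by
  have hle (l : L) (_ : l ∈ univ) := h.card_inter_lecAsg_le l
  -- Every `T₁`-student is matched in `B`, so the inequalities cannot be strict after summing.
  have hsum : ∑ l, (T₁ ∩ lecAsg I A l).card ≤ ∑ l, (T₁ ∩ lecAsg I B l).card := by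
    have hmatched : T₁ ⊆ univ.biUnion (projAsg B) := fun x hx => by
      obtain ⟨p, hxp, -⟩ := h.moved₁ x hx
      exact mem_biUnion.2 ⟨p, mem_univ p, mem_projAsg.2 hxp⟩
    rw [sum_card_inter_lecAsg h.left_matching, sum_card_inter_lecAsg h.right_matching,
      inter_eq_left.2 hmatched]
    exact card_le_card inter_subset_left
  exact (sum_eq_sum_iff_of_le hle).1 ((sum_le_sum hle).antisymm hsum) l (mem_univ l)

theorem card_inter_projAsg_eq {p : P}
    (hl : (lecAsg I A (I.lec p)).card < I.d (I.lec p)) :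
    (T₁ ∩ projAsg B p).card = (T₁ ∩ projAsg A p).card := by
  have hle (q : P) (hq : q ∈ univ.filter fun q => I.lec q = I.lec p) :=
    h.card_inter_projAsg_le q fun ⟨x, hx⟩ => by
      rw [mem_inter, mem_projAsg] at hx
      refine (card_projAsg_le h.left_matching q).eq_or_lt.resolve_right fun hund => ?_
      have := h.lecAsg_full₁ x hx.1 q hx.2 hund
      rw [(mem_filter.1 hq).2] at this
      omega
  have hsum := h.card_inter_lecAsg_eq (I.lec p)
  rw [card_inter_lecAsg h.right_matching, card_inter_lecAsg h.left_matching] at hsum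
  exact (sum_eq_sum_iff_of_le hle).1 hsum p (by simp)

theorem card_lecAsg_eq (l : L) : (lecAsg I B l).card = (lecAsg I A l).card := by
  have hA := h.card_lecAsg l
  have hB := h.symm.card_lecAsg l
  rw [inter_comm B A] at hB
  have h₁ := h.card_inter_lecAsg_eq l
  have h₂ := h.symm.card_inter_lecAsg_eq l
  omega

theorem card_projAsg_eq {p : P} (hl : (lecAsg I A (I.lec p)).card < I.d (I.lec p)) :
    (projAsg B p).card = (projAsg A p).card := by
  have hA := h.card_projAsg p
  have hB := h.symm.card_projAsg p
  rw [inter_comm B A] at hB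
  have h₁ := h.card_inter_projAsg_eq hl
  have h₂ := h.symm.card_inter_projAsg_eq (p := p) (by rwa [h.card_lecAsg_eq])
  omega

end IsExchange

end Exchange

section Stability

variable {M W : Finset (S × P)}

noncomputable def weakGainers (I : SPAST S P L) (M W : Finset (S × P)) : Finset S :=
  univ.filter fun x => ∃ p, (x, p) ∈ W ∧ (x, p) ∉ M ∧
    ∀ q, (x, q) ∈ M → ¬(I.sPref x q p ∧ ¬I.sPref x p q)

noncomputable def strictLosers (I : SPAST S P L) (M W : Finset (S × P)) : Finset S :=
  univ.filter fun y => ∃ q, (y, q) ∈ M ∧ (y, q) ∉ W ∧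
    ∀ p, (y, p) ∈ W → I.sPref y q p ∧ ¬I.sPref y p q

theorem of_mem_weakGainers (hW : I.IsMatching W) {x : S} {p : P} (hx : x ∈ weakGainers I M W)
    (hxp : (x, p) ∈ W) :
    (x, p) ∉ M ∧ ∀ q, (x, q) ∈ M → ¬(I.sPref x q p ∧ ¬I.sPref x p q) := by
  obtain ⟨p', hp', h⟩ := (mem_filter.1 hx).2
  obtain rfl := hW.2.1 x p' p hp' hxp
  exact h

theorem of_mem_strictLosers (hM : I.IsMatching M) {y : S} {q : P}
    (hy : y ∈ strictLosers I M W) (hyq : (y, q) ∈ M) :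
    (y, q) ∉ W ∧ ∀ p, (y, p) ∈ W → I.sPref y q p ∧ ¬I.sPref y p q := by
  obtain ⟨q', hq', h⟩ := (mem_filter.1 hy).2
  obtain rfl := hM.2.1 y q' q hq' hyq
  exact h

theorem disjoint_weakGainers_strictLosers :
    Disjoint (weakGainers I M W) (strictLosers I M W) := by
  refine disjoint_left.2 fun x hx hx' => ?_
  obtain ⟨p, hp, -, hgain⟩ := (mem_filter.1 hx).2
  obtain ⟨q, hq, -, hlose⟩ := (mem_filter.1 hx').2
  exact hgain q hq (hlose p hp)

theorem mem_weakGainers_or_strictLosers_of_mem_left (hM : I.IsMatching M) {s : S} {q : P}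
    (hsq : (s, q) ∈ M) (hsW : (s, q) ∉ W) :
    s ∈ weakGainers I M W ∨ s ∈ strictLosers I M W := by
  by_cases hgain : ∃ p, (s, p) ∈ W ∧ ¬(I.sPref s q p ∧ ¬I.sPref s p q)
  · obtain ⟨p, hsp, hpref⟩ := hgain
    refine .inl (mem_filter.2 ⟨mem_univ s, p, hsp, fun hsp' => ?_, fun q' hsq' => ?_⟩)
    · exact hsW (hM.2.1 s p q hsp' hsq ▸ hsp)
    · rwa [hM.2.1 s q' q hsq' hsq]
  · push Not at hgain
    exact .inr (mem_filter.2 ⟨mem_univ s, q, hsq, hsW, hgain⟩)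

theorem mem_weakGainers_or_strictLosers_of_mem_right (hW : I.IsMatching W) {s : S} {p : P}
    (hsp : (s, p) ∈ W) (hsM : (s, p) ∉ M) :
    s ∈ weakGainers I M W ∨ s ∈ strictLosers I M W := by
  by_cases hlose : ∃ q, (s, q) ∈ M ∧ I.sPref s q p ∧ ¬I.sPref s p q
  · obtain ⟨q, hsq, hpref⟩ := hlose
    refine .inr (mem_filter.2 ⟨mem_univ s, q, hsq, fun hsq' => ?_, fun p' hsp' => ?_⟩)
    · exact hsM (hW.2.1 s q p hsq' hsp ▸ hsq)
    · rwa [hW.2.1 s p' p hsp' hsp]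
  · exact .inl (mem_filter.2 ⟨mem_univ s, p, hsp, hsM, fun q hsq hpref => hlose ⟨q, hsq, hpref⟩⟩)

theorem SuperStable.lecAsg_full (hM : SuperStable I M) (hW : I.IsMatching W) {x : S} {p : P}
    (hx : x ∈ weakGainers I M W) (hxp : (x, p) ∈ W) (hund : (projAsg M p).card < I.c p) :
    (lecAsg I M (I.lec p)).card = I.d (I.lec p) := by
  obtain ⟨hxM, hpref⟩ := of_mem_weakGainers hW hx hxp
  exact (card_lecAsg_le hM.1 _).eq_or_lt.resolve_right fun hlt =>
    hM.2 x p ⟨hW.1 _ hxp, hxM, hpref, .inl ⟨hund, hlt⟩⟩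

theorem SuperStable.lPref_of_obstructs (hM : SuperStable I M) (hW : I.IsMatching W) {x y : S}
    {p : P} (hx : x ∈ weakGainers I M W) (hxp : (x, p) ∈ W) (hy : Obstructs I M p y) :
    I.lPref (I.lec p) y x ∧ ¬I.lPref (I.lec p) x y := by
  obtain ⟨hxM, hpref⟩ := of_mem_weakGainers hW hx hxp
  have hblock := fun hb => hM.2 x p ⟨hW.1 _ hxp, hxM, hpref, hb⟩
  have hxk : RankedBy I (I.lec p) x := ⟨p, hW.1 _ hxp, rfl⟩
  have hlec : ∀ t ∈ lecAsg I M (I.lec p), RankedBy I (I.lec p) t :=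
    fun t => rankedBy_of_mem_lecAsg hM.1
  rcases hy with ⟨hfull, hy⟩ | ⟨hund, hy⟩
  · refine lPref_strict_of_forall_worstIn (fun t ht => hlec t ?_) hxk
      (fun t ht hxt => hblock (.inr (.inr ⟨hfull, t, ht, hxt⟩))) hy
    exact mem_lecAsg.2 ⟨p, mem_projAsg.1 ht, rfl⟩
  · have hfullL := hM.lecAsg_full hW hx hxp hund
    exact lPref_strict_of_forall_worstIn hlec hxk
      (fun t ht hxt => hblock (.inr (.inl ⟨hund, hfullL, .inr ⟨t, ht, hxt⟩⟩))) hy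

theorem WeaklyStable.lecAsg_full (hW : WeaklyStable I W) (hM : I.IsMatching M) {y : S} {q : P}
    (hy : y ∈ strictLosers I M W) (hyq : (y, q) ∈ M) (hund : (projAsg W q).card < I.c q) :
    (lecAsg I W (I.lec q)).card = I.d (I.lec q) := by
  obtain ⟨hyW, hpref⟩ := of_mem_strictLosers hM hy hyq
  exact (card_lecAsg_le hW.1 _).eq_or_lt.resolve_right fun hlt =>
    hW.2 y q ⟨hM.1 _ hyq, hyW, hpref, .inl ⟨hund, hlt⟩⟩

theorem WeaklyStable.lPref_of_obstructs (hW : WeaklyStable I W) (hM : I.IsMatching M)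
    {x y : S} {q : P} (hy : y ∈ strictLosers I M W) (hyq : (y, q) ∈ M)
    (hx : Obstructs I W q x) : I.lPref (I.lec q) x y := by
  obtain ⟨hyW, hpref⟩ := of_mem_strictLosers hM hy hyq
  have hblock := fun hb => hW.2 y q ⟨hM.1 _ hyq, hyW, hpref, hb⟩
  have hyk : RankedBy I (I.lec q) y := ⟨q, hM.1 _ hyq, rfl⟩
  have hlec : ∀ t ∈ lecAsg I W (I.lec q), RankedBy I (I.lec q) t :=
    fun t => rankedBy_of_mem_lecAsg hW.1
  rcases hx with ⟨hfull, hx⟩ | ⟨hund, hx⟩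
  · refine lPref_of_forall_worstIn (fun t ht => hlec t ?_) hyk
      (fun t ht hyt => not_not.1 fun hty => hblock (.inr (.inr ⟨hfull, t, ht, hyt, hty⟩))) hx
    exact mem_lecAsg.2 ⟨q, mem_projAsg.1 ht, rfl⟩
  · have hfullL := hW.lecAsg_full hM hy hyq hund
    exact lPref_of_forall_worstIn hlec hyk
      (fun t ht hyt => not_not.1 fun hty =>
        hblock (.inr (.inl ⟨hund, hfullL, .inr ⟨t, ht, hyt, hty⟩⟩))) hx

theorem SuperStable.isExchange (hM : SuperStable I M) (hW : WeaklyStable I W) :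
    IsExchange I M W (weakGainers I M W) (strictLosers I M W) where
  left_matching := hM.1
  right_matching := hW.1
  moved₁ _ hx := let ⟨p, hxp, hxM, _⟩ := (mem_filter.1 hx).2; ⟨p, hxp, hxM⟩
  moved₂ _ hy := let ⟨q, hyq, hyW, _⟩ := (mem_filter.1 hy).2; ⟨q, hyq, hyW⟩
  disjoint := disjoint_weakGainers_strictLosers
  cover_left _ _ := mem_weakGainers_or_strictLosers_of_mem_left hM.1
  cover_right _ _ := mem_weakGainers_or_strictLosers_of_mem_right hW.1
  lecAsg_full₁ _ hx _ := hM.lecAsg_full hW.1 hx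
  lecAsg_full₂ _ hy _ := hW.lecAsg_full hM.1 hy
  no_clash x hx y hy p q hxp hyq hl hyM hxW := by
    have hstrict := hM.lPref_of_obstructs hW.1 hx hxp hyM
    have hweak := hW.lPref_of_obstructs hM.1 hy hyq hxW
    rw [← hl] at hweak
    exact hstrict.2 hweak

end Stability

end SPAST

open SPAST in
theorem weakly_stable_project_counts_eq_of_super_stable_exists {S P L : Type} [Fintype S] [Fintype P] [Fintype L]
    [DecidableEq S] [DecidableEq P] [DecidableEq L]
    (I : SPAST S P L) (hss : ∃ M : Finset (S × P), SuperStable I M)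
    (M1 M2 : Finset (S × P)) (h1 : WeaklyStable I M1) (h2 : WeaklyStable I M2)
    (k : L) (hk : (lecAsg I M1 k).card < I.d k) (p : P) (hp : I.lec p = k) :
    (projAsg M1 p).card = (projAsg M2 p).card := by
  obtain ⟨M, hM⟩ := hss
  have e₁ := hM.isExchange h1
  have e₂ := hM.isExchange h2
  subst hp
  have hkM : (lecAsg I M (I.lec p)).card < I.d (I.lec p) := by rwa [← e₁.card_lecAsg_eq]
  rw [e₁.card_projAsg_eq hkM, e₂.card_projAsg_eq hkM]
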